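/- Let d ≥ 3 be an integer and let f ∈ C[x,y,z] be given by f = (xz)^m + y^{2m} if d = 2m is even (m ≥ 2) and by f = y·((xz)^m + y^{2m}) if d = 2m + 1 is odd (m ≥ 1). Then for every integer j with 1 ≤ j ≤ d − 3, the complex vector space { (a,b,c) ∈ AR(f)_j : a_x + b_y + c_z = 0 } has dimension ⌊(j+1)/2⌋. -/

import Mathlib

open MvPolynomial

/-- The ℂ-linear Jacobian map sending `(a,b,c)` to `a·f_x + b·f_y + c·f_z`. -/
noncomputable def jacC (f : MvPolynomial (Fin 3) ℂ) :
    (Fin 3 → MvPolynomial (Fin 3) ℂ) →ₗ[ℂ] MvPolynomial (Fin 3) ℂ where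
  toFun v := ∑ i, v i * pderiv i f
  map_add' a b := by simp [add_mul, Finset.sum_add_distrib]
  map_smul' c a := by simp [Finset.smul_sum, smul_mul_assoc]

/-- The ℂ-linear divergence map sending `(a,b,c)` to `a_x + b_y + c_z`. -/
noncomputable def divC :
    (Fin 3 → MvPolynomial (Fin 3) ℂ) →ₗ[ℂ] MvPolynomial (Fin 3) ℂ where
  toFun v := ∑ i, pderiv i (v i)
  map_add' a b := by simp [Finset.sum_add_distrib]
  map_smul' c a := by simp [Finset.smul_sum]

/-- The ℂ-vector space of Jacobian syzygies of `f` that are homogeneous of degree `j`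
and are annihilated by the divergence map. -/
noncomputable def V (f : MvPolynomial (Fin 3) ℂ) (j : ℕ) :
    Submodule ℂ (Fin 3 → MvPolynomial (Fin 3) ℂ) :=
  (Submodule.pi Set.univ fun _ => homogeneousSubmodule (Fin 3) ℂ j) ⊓
    LinearMap.ker (jacC f) ⊓ LinearMap.ker divC

/-!
The torus action `(x, y, z) ↦ (t x, y, t⁻¹ z)` fixes `f`, so `D = x ∂ₓ - z ∂_z` kills `f`. Hence
every `h` yields the syzygy `(x h, 0, -z h)`, whose divergence is `D h`. Conversely, writing out
`a f_x + b f_y + c f_z = 0` exhibits it as `P + Q y^(d-1) = 0`, where `P` has `y`-degree at most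
`j + 1 < d - 1`, so both parts vanish: `b = 0` and `a z + c x = 0`, i.e. the syzygy is
`(x h, 0, -z h)`. The space in question is therefore `ker D` on forms of degree `j - 1`, spanned by
the monomials `x^a y^(j-1-2a) z^a`.
-/

namespace MvPolynomial

variable {σ R : Type*}

section CommSemiring

variable [CommSemiring R]

theorem IsHomogeneous.degreeOf_le {p : MvPolynomial σ R} {n : ℕ} (hp : p.IsHomogeneous n)
    (i : σ) : p.degreeOf i ≤ n :=
  (degreeOf_le_totalDegree p i).trans hp.totalDegree_le

theorem IsHomogeneous.of_X_mul {p : MvPolynomial σ R} {i : σ} {n : ℕ}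
    (h : (X i * p).IsHomogeneous (n + 1)) : p.IsHomogeneous n := by
  intro μ hμ
  have := h (show coeff (Finsupp.single i 1 + μ) (X i * p) ≠ 0 by rwa [coeff_X_mul])
  simp only [map_add, Finsupp.weight_single, Pi.one_apply, smul_eq_mul, mul_one] at this
  omega

theorem coeff_X_mul_pderiv (i : σ) (p : MvPolynomial σ R) (μ : σ →₀ ℕ) :
    coeff μ (X i * pderiv i p) = μ i * coeff μ p := by
  induction p using MvPolynomial.induction_on' with
  | monomial s a =>
    classical
    simp only [X_mul_pderiv_monomial, coeff_smul, coeff_monomial]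
    split_ifs with h <;> simp [h, nsmul_eq_mul]
  | add p q hp hq => simp only [mul_add, map_add, coeff_add, hp, hq]

theorem restrictSupport_inf (s t : Set (σ →₀ ℕ)) :
    restrictSupport R s ⊓ restrictSupport R t = restrictSupport R (s ∩ t) := by
  ext p
  simp only [Submodule.mem_inf, mem_restrictSupport_iff, Set.subset_inter_iff]

theorem finrank_restrictSupport (s : Set (σ →₀ ℕ)) [Finite s] [Nontrivial R] :
    Module.finrank R (restrictSupport R s) = Nat.card s :=
  Module.finrank_eq_nat_card_basis (basisRestrictSupport R s)

end CommSemiring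

section CommRing

variable [CommRing R]

theorem eq_zero_of_add_mul_X_pow_eq_zero {p q : MvPolynomial σ R} {i : σ} {k : ℕ}
    (hp : p.degreeOf i < k) (h : p + q * X i ^ k = 0) : p = 0 ∧ q = 0 := by
  have hq : q = 0 := by
    by_contra hq
    have := degreeOf_mul_X_self_pow_eq_add_of_ne_zero i k hq
    rw [eq_neg_of_add_eq_zero_right h, degreeOf_neg] at this
    omega
  exact ⟨by simpa [hq] using h, hq⟩

variable (R) in
noncomputable def torusDerivation (i j : σ) :
    Derivation R (MvPolynomial σ R) (MvPolynomial σ R) :=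
  (X i : MvPolynomial σ R) • pderiv i - (X j : MvPolynomial σ R) • pderiv j

theorem torusDerivation_apply (i j : σ) (p : MvPolynomial σ R) :
    torusDerivation R i j p = X i * pderiv i p - X j * pderiv j p := by
  simp [torusDerivation]

theorem coeff_torusDerivation (i j : σ) (p : MvPolynomial σ R) (μ : σ →₀ ℕ) :
    coeff μ (torusDerivation R i j p) = ((μ i : R) - μ j) * coeff μ p := by
  rw [torusDerivation_apply, coeff_sub, coeff_X_mul_pderiv, coeff_X_mul_pderiv, sub_mul]

theorem ker_torusDerivation [IsDomain R] [CharZero R] (i j : σ) :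
    LinearMap.ker (torusDerivation R i j).toLinearMap =
      restrictSupport R {μ | μ i = μ j} := by
  ext p
  simp only [LinearMap.mem_ker, Derivation.coeFn_coe, mem_restrictSupport_iff,
    Set.subset_def, Finset.mem_coe, mem_support_iff, Set.mem_ofPred_eq, MvPolynomial.ext_iff,
    coeff_torusDerivation, coeff_zero, mul_eq_zero, sub_eq_zero, Nat.cast_inj]
  exact forall_congr' fun μ => or_iff_not_imp_right

end CommRing

end MvPolynomial

local notation "S" => MvPolynomial (Fin 3) ℂ

theorem jacC_apply (f : S) (v : Fin 3 → S) :
    jacC f v = v 0 * pderiv 0 f + v 1 * pderiv 1 f + v 2 * pderiv 2 f :=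
  Fin.sum_univ_three _

theorem divC_apply (v : Fin 3 → S) :
    divC v = pderiv 0 (v 0) + pderiv 1 (v 1) + pderiv 2 (v 2) :=
  Fin.sum_univ_three _

noncomputable def torusSyzygy : S →ₗ[ℂ] (Fin 3 → S) :=
  LinearMap.pi ![LinearMap.mulLeft ℂ (X 0), 0, -LinearMap.mulLeft ℂ (X 2 : S)]

theorem torusSyzygy_apply (h : S) : torusSyzygy h = ![X 0 * h, 0, -(X 2 * h)] := by
  ext i : 1
  fin_cases i <;> simp [torusSyzygy]

theorem torusSyzygy_injective : Function.Injective torusSyzygy := fun g h hgh => by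
  simpa [torusSyzygy_apply, X_ne_zero] using congr_fun hgh 0

theorem jacC_torusSyzygy (f h : S) : jacC f (torusSyzygy h) = h * torusDerivation ℂ 0 2 f := by
  simp [jacC_apply, torusSyzygy_apply, torusDerivation_apply]
  ring

theorem divC_torusSyzygy (h : S) : divC (torusSyzygy h) = torusDerivation ℂ 0 2 h := by
  simp [divC_apply, torusSyzygy_apply, torusDerivation_apply, Derivation.leibniz]
  ring

theorem exists_torusSyzygy_eq {n : ℕ} {v : Fin 3 → S} (hv : (v 0).IsHomogeneous (n + 1))
    (h1 : v 1 = 0) (h02 : v 0 * X 2 + v 2 * X 0 = 0) :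
    ∃ h : S, h.IsHomogeneous n ∧ torusSyzygy h = v := by
  obtain ⟨h, hh⟩ : X 0 ∣ v 0 := by
    have : X 0 ∣ v 0 * X 2 := ⟨-v 2, by linear_combination h02⟩
    simpa using X_prime.dvd_or_dvd this
  refine ⟨h, IsHomogeneous.of_X_mul (hh ▸ hv), ?_⟩
  have h2 : v 2 = -(X 2 * h) := by
    have : X 0 * (v 2 + X 2 * h) = 0 := by linear_combination h02 - X 2 * hh
    simpa [X_ne_zero, add_eq_zero_iff_eq_neg] using this
  ext i : 1
  fin_cases i <;> simp [torusSyzygy_apply, hh, h1, h2]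

theorem V_succ_eq_map_torusSyzygy {f : S} {n : ℕ} (hf : torusDerivation ℂ 0 2 f = 0)
    (hshape : ∀ v : Fin 3 → S, (∀ i, (v i).IsHomogeneous (n + 1)) → jacC f v = 0 →
      v 1 = 0 ∧ v 0 * X 2 + v 2 * X 0 = 0) :
    V f (n + 1) = (homogeneousSubmodule (Fin 3) ℂ n ⊓
      LinearMap.ker (torusDerivation ℂ 0 2).toLinearMap).map torusSyzygy := by
  ext v
  simp only [V, Submodule.mem_inf, Submodule.mem_pi, Set.mem_univ, true_imp_iff,
    mem_homogeneousSubmodule, LinearMap.mem_ker, Submodule.mem_map, Derivation.coeFn_coe]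
  constructor
  · rintro ⟨⟨hv, hjac⟩, hdiv⟩
    obtain ⟨h1, h02⟩ := hshape v hv hjac
    obtain ⟨h, hh, rfl⟩ := exists_torusSyzygy_eq (hv 0) h1 h02
    exact ⟨h, ⟨hh, divC_torusSyzygy h ▸ hdiv⟩, rfl⟩
  · rintro ⟨h, ⟨hh, hD⟩, rfl⟩
    refine ⟨⟨fun i => ?_, by rw [jacC_torusSyzygy, hf, mul_zero]⟩, by rw [divC_torusSyzygy, hD]⟩
    rw [torusSyzygy_apply]
    fin_cases i
    · simpa [add_comm] using (isHomogeneous_X ℂ (0 : Fin 3)).mul hh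
    · exact isHomogeneous_zero _ _ _
    · simpa [add_comm] using ((isHomogeneous_X ℂ (2 : Fin 3)).mul hh).neg

theorem card_degree_eq_and_apply_zero_eq_apply_two (n : ℕ) :
    Nat.card {μ : Fin 3 →₀ ℕ | μ.degree = n ∧ μ 0 = μ 2} = n / 2 + 1 := by
  have degree_eq (μ : Fin 3 →₀ ℕ) : μ.degree = μ 0 + μ 1 + μ 2 := by
    rw [Finsupp.degree_eq_sum, Fin.sum_univ_three]
  rw [← Nat.card_fin (n / 2 + 1)]
  refine Nat.card_eq_of_bijective (fun μ => ⟨μ.1 0, ?_⟩) ⟨fun μ ν h => ?_, fun a => ?_⟩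
  · have := μ.2
    simp only [Set.mem_ofPred_eq, degree_eq] at this
    omega
  · have hμ := μ.2
    have hν := ν.2
    simp only [Set.mem_ofPred_eq, degree_eq, Fin.mk.injEq] at hμ hν h
    ext i
    fin_cases i <;> simp <;> omega
  · refine ⟨⟨Finsupp.equivFunOnFinite.symm ![a, n - 2 * a, a], ?_⟩, ?_⟩
    · simp [degree_eq]
      omega
    · simp

theorem finrank_homogeneousSubmodule_inf_ker_torusDerivation (n : ℕ) :
    Module.finrank ℂ (homogeneousSubmodule (Fin 3) ℂ n ⊓
      LinearMap.ker (torusDerivation ℂ 0 2).toLinearMap : Submodule ℂ S) = n / 2 + 1 := by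
  rw [ker_torusDerivation, homogeneousSubmodule_eq_finsupp_supported, ← restrictSupport,
    restrictSupport_inf, ← Set.ofPred_and]
  have hcard := card_degree_eq_and_apply_zero_eq_apply_two n
  have := Nat.finite_of_card_ne_zero (by rw [hcard]; lia)
  rw [finrank_restrictSupport, hcard]

theorem finrank_V_succ_of_shape {f : S} {n : ℕ} (hf : torusDerivation ℂ 0 2 f = 0)
    (hshape : ∀ v : Fin 3 → S, (∀ i, (v i).IsHomogeneous (n + 1)) → jacC f v = 0 →
      v 1 = 0 ∧ v 0 * X 2 + v 2 * X 0 = 0) :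
    Module.finrank ℂ (V f (n + 1)) = n / 2 + 1 := by
  rw [V_succ_eq_map_torusSyzygy hf hshape,
    ← (Submodule.equivMapOfInjective _ torusSyzygy_injective _).finrank_eq,
    finrank_homogeneousSubmodule_inf_ker_torusDerivation]

noncomputable def evenCurve (m : ℕ) : S := (X 0 * X 2) ^ m + X 1 ^ (2 * m)

noncomputable def oddCurve (m : ℕ) : S := X 1 * evenCurve m

theorem torusDerivation_evenCurve (m : ℕ) : torusDerivation ℂ 0 2 (evenCurve m) = 0 := by
  simp [evenCurve, torusDerivation_apply, Derivation.leibniz_pow, Derivation.leibniz]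
  ring

theorem torusDerivation_oddCurve (m : ℕ) : torusDerivation ℂ 0 2 (oddCurve m) = 0 := by
  rw [oddCurve, Derivation.leibniz, torusDerivation_evenCurve]
  simp [torusDerivation_apply]

theorem jacC_evenCurve (k : ℕ) (v : Fin 3 → S) :
    jacC (evenCurve (k + 1)) v =
      C ((k : ℂ) + 1) * (v 0 * X 2 + v 2 * X 0) * X 0 ^ k * X 2 ^ k
        + C (2 * ((k : ℂ) + 1)) * v 1 * X 1 ^ (2 * k + 1) := by
  simp [evenCurve, jacC_apply, mul_pow, Derivation.leibniz_pow, mul_add, map_ofNat]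
  ring

theorem jacC_oddCurve (k : ℕ) (v : Fin 3 → S) :
    jacC (oddCurve (k + 1)) v =
      (C ((k : ℂ) + 1) * ((v 0 * X 2 + v 2 * X 0) * X 1) + v 1 * X 0 * X 2) * X 0 ^ k * X 2 ^ k
        + C (2 * (k : ℂ) + 3) * v 1 * X 1 ^ (2 * k + 2) := by
  simp [oddCurve, evenCurve, jacC_apply, mul_pow, Derivation.leibniz_pow, Derivation.leibniz,
    mul_add, map_ofNat]
  ring

theorem degreeOf_one_mul_X_two_add_mul_X_zero_le {j : ℕ} {v : Fin 3 → S}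
    (hv : ∀ i, (v i).IsHomogeneous j) : degreeOf 1 (v 0 * X 2 + v 2 * X 0) ≤ j :=
  (degreeOf_add_le _ _ _).trans <| max_le
    ((degreeOf_mul_X_of_ne _ (by decide)).trans_le ((hv 0).degreeOf_le 1))
    ((degreeOf_mul_X_of_ne _ (by decide)).trans_le ((hv 2).degreeOf_le 1))

theorem shape_of_jacC_evenCurve_eq_zero {k j : ℕ} (hj : j ≤ 2 * k) {v : Fin 3 → S}
    (hv : ∀ i, (v i).IsHomogeneous j)
    (h : jacC (evenCurve (k + 1)) v = 0) :
    v 1 = 0 ∧ v 0 * X 2 + v 2 * X 0 = 0 := by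
  rw [jacC_evenCurve] at h
  have hdeg : degreeOf 1 (C ((k : ℂ) + 1) * (v 0 * X 2 + v 2 * X 0) * X 0 ^ k * X 2 ^ k)
      < 2 * k + 1 := by
    rw [degreeOf_mul_X_pow_of_ne (i := 1) (j := 2) _ (by decide),
      degreeOf_mul_X_pow_of_ne (i := 1) (j := 0) _ (by decide)]
    have := degreeOf_one_mul_X_two_add_mul_X_zero_le hv
    have := degreeOf_C_mul_le (v 0 * X 2 + v 2 * X 0) 1 ((k : ℂ) + 1)
    omega
  obtain ⟨hp, hq⟩ := eq_zero_of_add_mul_X_pow_eq_zero hdeg h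
  simp only [mul_eq_zero, C_eq_zero, pow_eq_zero_iff', X_ne_zero, false_and, or_false,
    Nat.cast_add_one_ne_zero, false_or, two_ne_zero] at hp hq
  exact ⟨hq, hp⟩

theorem shape_of_jacC_oddCurve_eq_zero {k j : ℕ} (hj : j ≤ 2 * k) {v : Fin 3 → S}
    (hv : ∀ i, (v i).IsHomogeneous j)
    (h : jacC (oddCurve (k + 1)) v = 0) :
    v 1 = 0 ∧ v 0 * X 2 + v 2 * X 0 = 0 := by
  rw [jacC_oddCurve] at h
  have hdeg : degreeOf 1 ((C ((k : ℂ) + 1) * ((v 0 * X 2 + v 2 * X 0) * X 1)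
      + v 1 * X 0 * X 2) * X 0 ^ k * X 2 ^ k) < 2 * k + 2 := by
    rw [degreeOf_mul_X_pow_of_ne (i := 1) (j := 2) _ (by decide),
      degreeOf_mul_X_pow_of_ne (i := 1) (j := 0) _ (by decide)]
    refine (degreeOf_add_le _ _ _).trans_lt (max_lt ?_ ?_)
    · have := degreeOf_one_mul_X_two_add_mul_X_zero_le hv
      have := degreeOf_mul_X_self 1 (v 0 * X 2 + v 2 * X 0)
      have := degreeOf_C_mul_le ((v 0 * X 2 + v 2 * X 0) * X 1) 1 ((k : ℂ) + 1)
      omega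
    · rw [degreeOf_mul_X_of_ne (i := 1) (j := 2) _ (by decide),
        degreeOf_mul_X_of_ne (i := 1) (j := 0) _ (by decide)]
      have := (hv 1).degreeOf_le 1
      omega
  obtain ⟨hp, hq⟩ := eq_zero_of_add_mul_X_pow_eq_zero hdeg h
  have h1 : v 1 = 0 :=
    (mul_eq_zero.mp hq).resolve_left (by rw [C_eq_zero]; exact_mod_cast (2 * k + 2).succ_ne_zero)
  refine ⟨h1, ?_⟩
  simpa [h1, X_ne_zero, Nat.cast_add_one_ne_zero] using hp

theorem stmt19_general (d m : ℕ) (f : MvPolynomial (Fin 3) ℂ)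
    (hf : (d = 2 * m ∧ 2 ≤ m ∧ f = (X 0 * X 2) ^ m + X 1 ^ (2 * m)) ∨
          (d = 2 * m + 1 ∧ 1 ≤ m ∧ f = X 1 * ((X 0 * X 2) ^ m + X 1 ^ (2 * m)))) :
    ∀ j : ℕ, 1 ≤ j → j ≤ d - 3 → Module.finrank ℂ (V f j) = (j + 1) / 2 := by
  intro j hj hjd
  obtain ⟨n, rfl⟩ : ∃ n, j = n + 1 := ⟨j - 1, by omega⟩
  rw [show (n + 1 + 1) / 2 = n / 2 + 1 by omega]
  obtain ⟨k, rfl⟩ : ∃ k, m = k + 1 := ⟨m - 1, by omega⟩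
  rcases hf with ⟨rfl, -, rfl⟩ | ⟨rfl, -, rfl⟩
  · exact finrank_V_succ_of_shape (torusDerivation_evenCurve _)
      fun v hv h => shape_of_jacC_evenCurve_eq_zero (by omega) hv h
  · exact finrank_V_succ_of_shape (torusDerivation_oddCurve _)
      fun v hv h => shape_of_jacC_oddCurve_eq_zero (by omega) hv h

theorem stmt19 (d m : ℕ) (f : MvPolynomial (Fin 3) ℂ) (hd : 3 ≤ d)
    (hf : (d = 2 * m ∧ 2 ≤ m ∧ f = (X 0 * X 2) ^ m + X 1 ^ (2 * m)) ∨
          (d = 2 * m + 1 ∧ 1 ≤ m ∧ f = X 1 * ((X 0 * X 2) ^ m + X 1 ^ (2 * m)))) :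
    ∀ j : ℕ, 1 ≤ j → j ≤ d - 3 → Module.finrank ℂ (V f j) = (j + 1) / 2 :=
  stmt19_general d m f hf
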